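/- Let {y_k, w_k} be the sequences generated by the GFDPG method. Then for any k ≥ 1 and any L′ > 0 satisfying the descent condition at y_k, the iterates are bounded: max{ ‖p_{L′}(y_k)‖, ‖y_k‖, ‖w_k‖ } ≤ ‖y_0 − y_*‖ + ‖y_*‖. -/

import Mathlib

open scoped RealInnerProductSpace
open Set Filter Topology Metric

/-!
Write `q = F + G`. A proximal-gradient step `z = p_L(w)` that satisfies the descent condition obeys
`q z + L/2 ‖z - x‖² ≤ q x + L/2 ‖w - x‖²` for every `x`: `Q_L(·, w)` is `L`-strongly convex, so it
grows by `L/2 ‖x - z‖²` away from its minimizer, and `Q_L(x, w) ≤ q x + L/2 ‖x - w‖²` by the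
gradient inequality for `F`. At `x = y_*` the step moves no farther from `y_*`.

Solving `w_k = ((T_k - t_k) y_k + t_k z_k) / T_k` for `z_k` gives points with
`z_{k+1} = z_k + t_k (y_{k+1} - w_k)`. Adding the step inequality at `x = y_k` and `x = y_*` with
weights `T_k - t_k` and `t_k`, and using `t_k² ≤ T_k` and `L_k ≤ L_{k+1}`, shows that
`2 (T_k - t_k) (q y_k - q y_*) / L_k + ‖z_k - y_*‖²` is nonincreasing, so `‖z_k - y_*‖ ≤ ‖y_0 - y_*‖`.
By induction `y_k` and its convex combination `w_k` with `z_k` stay in the closed ball of radius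
`‖y_0 - y_*‖` around `y_*`, and then so does `p_{L'}(y_k)`.
-/

theorem ConvexOn.add_inner_le_of_hasGradientAt {V : Type*} [NormedAddCommGroup V]
    [InnerProductSpace ℝ V] [CompleteSpace V] {f : V → ℝ} (hf : ConvexOn ℝ univ f) {f' w : V}
    (hw : HasGradientAt f f' w) (x : V) :
    f w + ⟪x - w, f'⟫ ≤ f x := by
  have hline : HasDerivAt (f ∘ AffineMap.lineMap (k := ℝ) w x) ⟪x - w, f'⟫ 0 :=
    (hw.hasFDerivAt.comp_hasDerivAt_of_eq 0 AffineMap.hasDerivAt_lineMap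
      (AffineMap.lineMap_apply_zero w x).symm).congr_deriv (real_inner_comm _ _)
  have hslope := (hf.comp_affineMap (AffineMap.lineMap w x)).le_slope_of_hasDerivAt
    (mem_univ 0) (mem_univ 1) one_pos hline
  simp only [slope_def_field, Function.comp_apply, AffineMap.lineMap_apply_one,
    AffineMap.lineMap_apply_zero, sub_zero, div_one] at hslope
  linarith

theorem StrongConvexOn.add_sq_norm_sub_le_of_isMinOn {E : Type*} [NormedAddCommGroup E]
    [NormedSpace ℝ E] {s : Set E} {m : ℝ} {φ : E → ℝ} (hφ : StrongConvexOn s m φ) {z x : E}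
    (hz : IsMinOn φ s z) (hzs : z ∈ s) (hxs : x ∈ s) :
    φ z + m / 2 * ‖x - z‖ ^ 2 ≤ φ x := by
  have hseg : ∀ l ∈ Ioo (0 : ℝ) 1, φ z + m / 2 * (1 - l) * ‖x - z‖ ^ 2 ≤ φ x := by
    rintro l ⟨hl0, hl1⟩
    have hmin := hz (hφ.1 hzs hxs (sub_nonneg.2 hl1.le) hl0.le (sub_add_cancel 1 l))
    have hconv := hφ.2 hzs hxs (sub_nonneg.2 hl1.le) hl0.le (sub_add_cancel 1 l)
    rw [norm_sub_rev z x, smul_eq_mul, smul_eq_mul] at hconv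
    have hscaled : l * (φ z + m / 2 * (1 - l) * ‖x - z‖ ^ 2) ≤ l * φ x := by
      linarith [show φ z ≤ _ from hmin]
    exact le_of_mul_le_mul_left hscaled hl0
  have hlim : Tendsto (fun l : ℝ => φ z + m / 2 * (1 - l) * ‖x - z‖ ^ 2) (𝓝[>] 0)
      (𝓝 (φ z + m / 2 * ‖x - z‖ ^ 2)) :=
    tendsto_nhdsWithin_of_tendsto_nhds <| (by fun_prop : Continuous fun l : ℝ =>
      φ z + m / 2 * (1 - l) * ‖x - z‖ ^ 2).tendsto' 0 _ (by simp)
  exact le_of_tendsto hlim <| eventually_of_mem (Ioo_mem_nhdsGT one_pos) hseg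

section ProxGrad

variable {V : Type*} [NormedAddCommGroup V] [InnerProductSpace ℝ V]

/-- The weighted step inequalities at `a` and `b` telescope through this identity. -/
theorem momentum_sq_norm_identity {s τ : ℝ} {a b w z Z : V} (hZ : τ • Z = s • w - (s - τ) • a) :
    (s - τ) * (‖w - a‖ ^ 2 - ‖z - a‖ ^ 2) + τ * (‖w - b‖ ^ 2 - ‖z - b‖ ^ 2)
      = ‖Z - b‖ ^ 2 - ‖Z + τ • (z - w) - b‖ ^ 2 + (τ ^ 2 - s) * ‖z - w‖ ^ 2 := by
  have hZ' : ⟪Z, z - w⟫ * τ = ⟪s • w - (s - τ) • a, z - w⟫ := by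
    rw [← hZ, real_inner_smul_left, mul_comm]
  simp only [← real_inner_self_eq_norm_sq, inner_add_left, inner_add_right, inner_sub_left,
    inner_sub_right, real_inner_smul_left, real_inner_smul_right] at hZ' ⊢
  simp only [real_inner_comm w b, real_inner_comm z b, real_inner_comm Z b, real_inner_comm Z z,
    real_inner_comm Z w, real_inner_comm w z, real_inner_comm a w, real_inner_comm a z] at hZ' ⊢
  linear_combination 2 * hZ'

/-- `Q_L(y, w)`, with `F'` the gradient of `F`. -/
noncomputable def proxGradModel (F G : V → ℝ) (F' : V → V) (L : ℝ) (w y : V) : ℝ :=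
  F w + ⟪y - w, F' w⟫ + L / 2 * ‖y - w‖ ^ 2 + G y

theorem strongConvexOn_proxGradModel {F G : V → ℝ} (hG : ConvexOn ℝ univ G) (F' : V → V)
    (L : ℝ) (w : V) : StrongConvexOn univ L (proxGradModel F G F' L w) := by
  rw [strongConvexOn_iff_convex]
  have hlin : ConvexOn ℝ univ fun y => ⟪F' w - L • w, y⟫ :=
    (innerSL ℝ (F' w - L • w)).toLinearMap.convexOn convex_univ
  refine (hG.add (hlin.add_const (F w - ⟪w, F' w⟫ + L / 2 * ‖w‖ ^ 2))).congr fun y _ => ?_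
  simp only [proxGradModel, Pi.add_apply, norm_sub_sq_real, inner_sub_left,
    real_inner_smul_left, real_inner_comm y]
  ring

variable [CompleteSpace V] {F G : V → ℝ} {F' : V → V} {L : ℝ} {w z : V}

theorem proxGrad_le (hF : ConvexOn ℝ univ F) (hG : ConvexOn ℝ univ G)
    (hF' : HasGradientAt F (F' w) w) (hz : IsMinOn (proxGradModel F G F' L w) univ z)
    (hdesc : F z + G z ≤ proxGradModel F G F' L w z) (x : V) :
    F z + G z + L / 2 * ‖z - x‖ ^ 2 ≤ F x + G x + L / 2 * ‖w - x‖ ^ 2 := by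
  have hmin := (strongConvexOn_proxGradModel hG F' L w).add_sq_norm_sub_le_of_isMinOn hz
    (mem_univ z) (mem_univ x)
  have hgrad := hF.add_inner_le_of_hasGradientAt hF' x
  simp only [proxGradModel, norm_sub_rev x] at hmin hdesc
  linarith

theorem norm_proxGrad_sub_le (hF : ConvexOn ℝ univ F) (hG : ConvexOn ℝ univ G)
    (hF' : HasGradientAt F (F' w) w) (hL : 0 < L) (hz : IsMinOn (proxGradModel F G F' L w) univ z)
    (hdesc : F z + G z ≤ proxGradModel F G F' L w z) {x : V} (hx : ∀ y, F x + G x ≤ F y + G y) :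
    ‖z - x‖ ≤ ‖w - x‖ := by
  have hstep := proxGrad_le hF hG hF' hz hdesc x
  have hmin := hx z
  have hsq : ‖z - x‖ ^ 2 ≤ ‖w - x‖ ^ 2 := le_of_mul_le_mul_left (by linarith) (half_pos hL)
  exact (sq_le_sq₀ (norm_nonneg _) (norm_nonneg _)).1 hsq

theorem proxGrad_lyapunov_step (hF : ConvexOn ℝ univ F) (hG : ConvexOn ℝ univ G)
    (hF' : HasGradientAt F (F' w) w) (hL : 0 < L) (hz : IsMinOn (proxGradModel F G F' L w) univ z)
    (hdesc : F z + G z ≤ proxGradModel F G F' L w z) {t T : ℝ} (ht : 0 ≤ t) (htT : t ≤ T)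
    (htsq : t ^ 2 ≤ T) {a Z : V} (hZ : t • Z = T • w - (T - t) • a) (b : V) :
    2 / L * T * (F z + G z - (F b + G b)) + ‖Z + t • (z - w) - b‖ ^ 2
      ≤ 2 / L * (T - t) * (F a + G a - (F b + G b)) + ‖Z - b‖ ^ 2 := by
  have ha := mul_le_mul_of_nonneg_left (proxGrad_le hF hG hF' hz hdesc a) (sub_nonneg.2 htT)
  have hb := mul_le_mul_of_nonneg_left (proxGrad_le hF hG hF' hz hdesc b) ht
  have hid := momentum_sq_norm_identity (z := z) (b := b) hZ
  have hrest : 0 ≤ L / 2 * ((T - t ^ 2) * ‖z - w‖ ^ 2) := by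
    have := sub_nonneg.2 htsq
    positivity
  have key : T * (F z + G z - (F b + G b)) + L / 2 * ‖Z + t • (z - w) - b‖ ^ 2
      ≤ (T - t) * (F a + G a - (F b + G b)) + L / 2 * ‖Z - b‖ ^ 2 := by
    linear_combination ha + hb + L / 2 * hid + hrest
  calc _ = 2 / L * (T * (F z + G z - (F b + G b)) + L / 2 * ‖Z + t • (z - w) - b‖ ^ 2) := by
        field_simp
    _ ≤ 2 / L * ((T - t) * (F a + G a - (F b + G b)) + L / 2 * ‖Z - b‖ ^ 2) := by gcongr
    _ = _ := by field_simp

end ProxGrad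

section GFDPG

variable {V : Type*} [NormedAddCommGroup V] [InnerProductSpace ℝ V]

/-- The GFDPG recursion, with `y (k + 1)` any minimizer of `Q_{L_{k+1}}(·, w_k)` that satisfies
the descent condition, i.e. `p_{L_{k+1}}(w_k)`. -/
structure IsGFDPG (F G : V → ℝ) (F' : V → V) (y w : ℕ → V) (t T L : ℕ → ℝ) : Prop where
  w_zero : w 0 = y 0
  t_zero_pos : 0 < t 0
  t_zero_le_one : t 0 ≤ 1
  T_eq_sum : ∀ k, T k = ∑ i ∈ Finset.range (k + 1), t i
  L_pos : ∀ k, 0 < L k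
  L_le_succ : ∀ k, L k ≤ L (k + 1)
  isMinOn_succ : ∀ k, IsMinOn (proxGradModel F G F' (L (k + 1)) (w k)) univ (y (k + 1))
  descent_succ : ∀ k,
    F (y (k + 1)) + G (y (k + 1)) ≤ proxGradModel F G F' (L (k + 1)) (w k) (y (k + 1))
  t_succ_pos : ∀ k, 0 < t (k + 1)
  t_succ_sq_le : ∀ k, t (k + 1) ^ 2 ≤ T (k + 1)
  w_succ : ∀ k, w (k + 1) = y (k + 1)
    + (((T k - t k) * t (k + 1)) / (t k * T (k + 1))) • (y (k + 1) - y k)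
    + (((t k ^ 2 - T k) * t (k + 1)) / (t k * T (k + 1))) • (y (k + 1) - w k)

noncomputable def gfdpgAnchor (y w : ℕ → V) (t T : ℕ → ℝ) (n : ℕ) : V :=
  (t n)⁻¹ • (T n • w n - (T n - t n) • y n)

namespace IsGFDPG

variable {F G : V → ℝ} {F' : V → V} {y w : ℕ → V} {t T L : ℕ → ℝ}
  (h : IsGFDPG F G F' y w t T L)
include h

theorem t_pos (n : ℕ) : 0 < t n := by
  cases n with
  | zero => exact h.t_zero_pos
  | succ n => exact h.t_succ_pos n

theorem T_zero : T 0 = t 0 := by simp [h.T_eq_sum]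

theorem T_succ (n : ℕ) : T (n + 1) = T n + t (n + 1) := by
  rw [h.T_eq_sum, h.T_eq_sum, Finset.sum_range_succ]

theorem t_le_T (n : ℕ) : t n ≤ T n := by
  rw [h.T_eq_sum, Finset.sum_range_succ, le_add_iff_nonneg_left]
  exact Finset.sum_nonneg fun i _ => (h.t_pos i).le

theorem T_pos (n : ℕ) : 0 < T n := (h.t_pos n).trans_le (h.t_le_T n)

theorem t_sq_le (n : ℕ) : t n ^ 2 ≤ T n := by
  cases n with
  | zero =>
    rw [h.T_zero, sq]
    exact mul_le_of_le_one_left h.t_zero_pos.le h.t_zero_le_one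
  | succ n => exact h.t_succ_sq_le n

theorem t_smul_anchor (n : ℕ) : t n • gfdpgAnchor y w t T n = T n • w n - (T n - t n) • y n :=
  smul_inv_smul₀ (h.t_pos n).ne' _

theorem anchor_zero : gfdpgAnchor y w t T 0 = y 0 := by
  simp [gfdpgAnchor, h.T_zero, h.w_zero, (h.t_pos 0).ne']

theorem anchor_succ (n : ℕ) :
    gfdpgAnchor y w t T (n + 1) = gfdpgAnchor y w t T n + t n • (y (n + 1) - w n) := by
  have := (h.t_pos n).ne'
  have := (h.t_pos (n + 1)).ne'
  have := (h.T_succ n ▸ h.T_pos (n + 1)).ne'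
  simp only [gfdpgAnchor, h.w_succ n, h.T_succ n]
  match_scalars <;> field_simp <;> ring

theorem w_eq_convexCombo (n : ℕ) :
    w n = ((T n - t n) / T n) • y n + (t n / T n) • gfdpgAnchor y w t T n := by
  have := (h.t_pos n).ne'
  have := (h.T_pos n).ne'
  simp only [gfdpgAnchor]
  match_scalars
  · field_simp
  · field_simp
    ring

variable [CompleteSpace V] (hF : ConvexOn ℝ univ F) (hG : ConvexOn ℝ univ G)
  (hF' : ∀ v, HasGradientAt F (F' v) v) {x : V} (hx : ∀ v, F x + G x ≤ F v + G v)
include hF hG hF' hx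

theorem lyapunov_antitone :
    Antitone fun n => 2 / L n * (T n - t n) * (F (y n) + G (y n) - (F x + G x))
      + ‖gfdpgAnchor y w t T n - x‖ ^ 2 := by
  refine antitone_nat_of_succ_le fun n => ?_
  have hstep := proxGrad_lyapunov_step hF hG (hF' (w n)) (h.L_pos (n + 1)) (h.isMinOn_succ n)
    (h.descent_succ n) (h.t_pos n).le (h.t_le_T n) (h.t_sq_le n) (h.t_smul_anchor n) x
  have hgap := mul_nonneg (sub_nonneg.2 (h.t_le_T n)) (sub_nonneg.2 (hx (y n)))
  have hL : 2 / L (n + 1) ≤ 2 / L n :=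
    div_le_div_of_nonneg_left zero_le_two (h.L_pos n) (h.L_le_succ n)
  rw [h.anchor_succ n, show T (n + 1) - t (n + 1) = T n by rw [h.T_succ]; ring]
  refine hstep.trans ?_
  rw [mul_assoc, mul_assoc]
  gcongr

theorem norm_anchor_sub_le (n : ℕ) : ‖gfdpgAnchor y w t T n - x‖ ≤ ‖y 0 - x‖ := by
  have hE := h.lyapunov_antitone hF hG hF' hx (Nat.zero_le n)
  simp only [h.T_zero, sub_self, mul_zero, zero_mul, zero_add, h.anchor_zero] at hE
  have hgap : 0 ≤ 2 / L n * (T n - t n) * (F (y n) + G (y n) - (F x + G x)) :=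
    mul_nonneg (mul_nonneg (div_nonneg zero_le_two (h.L_pos n).le) (sub_nonneg.2 (h.t_le_T n)))
      (sub_nonneg.2 (hx (y n)))
  exact (sq_le_sq₀ (norm_nonneg _) (norm_nonneg _)).1 (by linarith)

theorem iterates_mem_closedBall (n : ℕ) :
    y n ∈ closedBall x ‖y 0 - x‖ ∧ w n ∈ closedBall x ‖y 0 - x‖ := by
  have hw : ∀ n, y n ∈ closedBall x ‖y 0 - x‖ → w n ∈ closedBall x ‖y 0 - x‖ := fun n hy => by
    rw [h.w_eq_convexCombo n]
    refine convex_closedBall x _ hy (mem_closedBall_iff_norm.2 (h.norm_anchor_sub_le hF hG hF' hx n))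
      (div_nonneg (sub_nonneg.2 (h.t_le_T n)) (h.T_pos n).le) (div_nonneg (h.t_pos n).le
      (h.T_pos n).le) ?_
    rw [← add_div, sub_add_cancel, div_self (h.T_pos n).ne']
  have hy : ∀ n, y n ∈ closedBall x ‖y 0 - x‖ := fun n => by
    induction n with
    | zero => exact mem_closedBall_iff_norm.2 le_rfl
    | succ n ih =>
      exact mem_closedBall_iff_norm.2 <| (norm_proxGrad_sub_le hF hG (hF' (w n)) (h.L_pos (n + 1))
        (h.isMinOn_succ n) (h.descent_succ n) hx).trans (mem_closedBall_iff_norm.1 (hw n ih))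
  exact ⟨hy n, hw n (hy n)⟩

end IsGFDPG

end GFDPG

theorem gfdpg_iterates_bounded_general
    {V : Type*} [NormedAddCommGroup V] [InnerProductSpace ℝ V] [FiniteDimensional ℝ V]
    (F G : V → ℝ)
    (hF : ConvexOn ℝ Set.univ F) (hG : ConvexOn ℝ Set.univ G)
    (F' : V → V) (hF' : ∀ y, HasGradientAt F (F' y) y)
    -- q̃ := F + G attains its minimum at y_*
    (ystar : V) (hystar : ∀ y, F ystar + G ystar ≤ F y + G y)
    -- p_L(w) : the unique minimizer over y of Q_L(y, w)
    (P : ℝ → V → V)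
    (hP : ∀ L, 0 < L → ∀ w, IsMinOn
      (fun y => F w + ⟪y - w, F' w⟫ + L / 2 * ‖y - w‖^2 + G y) Set.univ (P L w))
    -- the GFDPG method
    (y w : ℕ → V) (t T Lk : ℕ → ℝ)
    (hw0 : w 0 = y 0) (hL0 : 0 < Lk 0)
    (ht0pos : 0 < t 0) (ht0le : t 0 ≤ 1)
    (hT : ∀ k : ℕ, T k = ∑ i ∈ Finset.range (k+1), t i)
    (hLmono : ∀ k : ℕ, Lk k ≤ Lk (k+1))
    (hdesc : ∀ k : ℕ,
      F (P (Lk (k+1)) (w k)) + G (P (Lk (k+1)) (w k)) ≤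
        F (w k) + ⟪P (Lk (k+1)) (w k) - w k, F' (w k)⟫
          + Lk (k+1) / 2 * ‖P (Lk (k+1)) (w k) - w k‖^2 + G (P (Lk (k+1)) (w k)))
    (hy : ∀ k : ℕ, y (k+1) = P (Lk (k+1)) (w k))
    (htpos : ∀ k : ℕ, 0 < t (k+1)) (htsq : ∀ k : ℕ, t (k+1) ^ 2 ≤ T (k+1))
    (hw : ∀ k : ℕ, w (k+1) = y (k+1)
      + (((T k - t k) * t (k+1)) / (t k * T (k+1))) • (y (k+1) - y k)
      + (((t k ^ 2 - T k) * t (k+1)) / (t k * T (k+1))) • (y (k+1) - w k))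
    (k : ℕ)
    -- L′ > 0 satisfying the descent condition at y_k
    (L' : ℝ) (hL' : 0 < L')
    (hdesc' : F (P L' (y k)) + G (P L' (y k)) ≤
      F (y k) + ⟪P L' (y k) - y k, F' (y k)⟫
        + L' / 2 * ‖P L' (y k) - y k‖^2 + G (P L' (y k))) :
    max (max ‖P L' (y k)‖ ‖y k‖) ‖w k‖ ≤ ‖y 0 - ystar‖ + ‖ystar‖ := by
  have hLpos : ∀ k, 0 < Lk k := fun k => hL0.trans_le (monotone_nat_of_le_succ hLmono k.zero_le)
  have hM : IsGFDPG F G F' y w t T Lk :=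
    { w_zero := hw0, t_zero_pos := ht0pos, t_zero_le_one := ht0le, T_eq_sum := hT,
      L_pos := hLpos, L_le_succ := hLmono, t_succ_pos := htpos, t_succ_sq_le := htsq, w_succ := hw
      isMinOn_succ := fun k => hy k ▸ hP _ (hLpos (k + 1)) (w k)
      descent_succ := fun k => hy k ▸ hdesc k }
  obtain ⟨hyk, hwk⟩ := hM.iterates_mem_closedBall hF hG hF' hystar k
  have hpk : P L' (y k) ∈ closedBall ystar ‖y 0 - ystar‖ :=
    mem_closedBall_iff_norm.2 <| (norm_proxGrad_sub_le hF hG (hF' (y k)) hL' (hP L' hL' (y k))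
      hdesc' hystar).trans (mem_closedBall_iff_norm.1 hyk)
  simp only [add_comm _ ‖ystar‖]
  exact max_le (max_le (norm_le_of_mem_closedBall hpk) (norm_le_of_mem_closedBall hyk))
    (norm_le_of_mem_closedBall hwk)

/-- For the GFDPG sequences, for any `k ≥ 1` and any `L′ > 0` satisfying the
descent condition at `y_k`, the iterates are bounded:
`max{ ‖p_{L′}(y_k)‖, ‖y_k‖, ‖w_k‖ } ≤ ‖y_0 − y_*‖ + ‖y_*‖`. -/
theorem gfdpg_iterates_bounded
    {V : Type*} [NormedAddCommGroup V] [InnerProductSpace ℝ V] [FiniteDimensional ℝ V]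
    (F G : V → ℝ) (LF : ℝ)
    (hF : ConvexOn ℝ Set.univ F) (hG : ConvexOn ℝ Set.univ G)
    (F' : V → V) (hF' : ∀ y, HasGradientAt F (F' y) y)
    (hLip : ∀ y w : V, ‖F' y - F' w‖ ≤ LF * ‖y - w‖)
    -- q̃ := F + G attains its minimum at y_*
    (ystar : V) (hystar : ∀ y, F ystar + G ystar ≤ F y + G y)
    -- p_L(w) : the unique minimizer over y of Q_L(y, w)
    (P : ℝ → V → V)
    (hP : ∀ L, 0 < L → ∀ w, IsMinOn
      (fun y => F w + ⟪y - w, F' w⟫ + L / 2 * ‖y - w‖^2 + G y) Set.univ (P L w))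
    -- the GFDPG method
    (y w : ℕ → V) (t T Lk : ℕ → ℝ)
    (hw0 : w 0 = y 0) (hL0 : 0 < Lk 0)
    (ht0 : t 0 = T 0) (ht0pos : 0 < t 0) (ht0le : t 0 ≤ 1)
    (hT : ∀ k : ℕ, T k = ∑ i ∈ Finset.range (k+1), t i)
    (hLmono : ∀ k : ℕ, Lk k ≤ Lk (k+1))
    (hdesc : ∀ k : ℕ,
      F (P (Lk (k+1)) (w k)) + G (P (Lk (k+1)) (w k)) ≤
        F (w k) + ⟪P (Lk (k+1)) (w k) - w k, F' (w k)⟫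
          + Lk (k+1) / 2 * ‖P (Lk (k+1)) (w k) - w k‖^2 + G (P (Lk (k+1)) (w k)))
    (hy : ∀ k : ℕ, y (k+1) = P (Lk (k+1)) (w k))
    (htpos : ∀ k : ℕ, 0 < t (k+1)) (htsq : ∀ k : ℕ, t (k+1) ^ 2 ≤ T (k+1))
    (hw : ∀ k : ℕ, w (k+1) = y (k+1)
      + (((T k - t k) * t (k+1)) / (t k * T (k+1))) • (y (k+1) - y k)
      + (((t k ^ 2 - T k) * t (k+1)) / (t k * T (k+1))) • (y (k+1) - w k))
    (k : ℕ) (hk : 1 ≤ k)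
    -- L′ > 0 satisfying the descent condition at y_k
    (L' : ℝ) (hL' : 0 < L')
    (hdesc' : F (P L' (y k)) + G (P L' (y k)) ≤
      F (y k) + ⟪P L' (y k) - y k, F' (y k)⟫
        + L' / 2 * ‖P L' (y k) - y k‖^2 + G (P L' (y k))) :
    max (max ‖P L' (y k)‖ ‖y k‖) ‖w k‖ ≤ ‖y 0 - ystar‖ + ‖ystar‖ :=
  gfdpg_iterates_bounded_general F G hF hG F' hF' ystar hystar P hP y w t T Lk hw0 hL0 ht0pos ht0le
    hT hLmono hdesc hy htpos htsq hw k L' hL' hdesc'
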